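/- arXiv:2503.10562 — 2 statements merged into one kernel-verified Lean document; each statement's English description precedes it below -/
import Mathlib

section
/- Intersection of tensor products of subspaces: Let K be a field and V, W vector spaces over K. For subspaces P ≤ V and Q ≤ W, write P ⊗̂ Q for the subspace of V ⊗ W spanned by all elementary tensors p ⊗ q with p ∈ P, q ∈ Q. Then for all subspaces A, A′ ≤ V and B, B′ ≤ W one has (A ⊗̂ B′) ∩ (A′ ⊗̂ B) = (A ∩ A′) ⊗̂ (B ∩ B′). -/
/-!
Over a field every module is flat. By right exactness, `V ⊗̂ Q` is the kernel of
`V ⊗ W → V ⊗ (W/Q)`; intersecting it with `P ⊗̂ W ≅ P ⊗ W` and using that `P ⊗ (W/Q)` embeds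
into `V ⊗ (W/Q)` gives `P ⊗̂ Q = (P ⊗̂ W) ∩ (V ⊗̂ Q)`. Likewise `P ⊗̂ W` is the kernel of
`V ⊗ W → (V/P) ⊗ W`, and flatness of `W` turns `(P ⊗̂ W) ∩ (P' ⊗̂ W)` into `(P ∩ P') ⊗̂ W`.
Both sides of the theorem thus become the same four-fold intersection.
-/

open TensorProduct

/-- For subspaces `P ≤ V` and `Q ≤ W`, the subspace of `V ⊗ W` spanned by the
elementary tensors `p ⊗ q` with `p ∈ P` and `q ∈ Q`. -/
noncomputable def tensorSpan (K : Type*) {V W : Type*} [Field K]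
    [AddCommGroup V] [Module K V] [AddCommGroup W] [Module K W]
    (P : Submodule K V) (Q : Submodule K W) : Submodule K (V ⊗[K] W) :=
  Submodule.span K {t : V ⊗[K] W | ∃ p ∈ P, ∃ q ∈ Q, t = p ⊗ₜ[K] q}

open LinearMap Submodule

theorem LinearMap.range_inf_ker_eq_map_ker_comp {R M₁ M₂ M₃ : Type*} [Semiring R]
    [AddCommMonoid M₁] [Module R M₁] [AddCommMonoid M₂] [Module R M₂]
    [AddCommMonoid M₃] [Module R M₃] (f : M₁ →ₗ[R] M₂) (g : M₂ →ₗ[R] M₃) :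
    range f ⊓ ker g = map f (ker (g ∘ₗ f)) := by
  rw [ker_comp, map_comap_eq]

section TensorProduct

variable {R M N : Type*}

section CommSemiring

variable [CommSemiring R] [AddCommMonoid M] [Module R M] [AddCommMonoid N] [Module R N]

theorem LinearMap.range_rTensor_eq_map₂ {P : Type*} [AddCommMonoid P] [Module R P]
    (f : P →ₗ[R] M) : range (rTensor N f) = map₂ (TensorProduct.mk R M N) (range f) ⊤ := by
  rw [rTensor, range_map, range_id]

theorem LinearMap.range_lTensor_eq_map₂ {P : Type*} [AddCommMonoid P] [Module R P]
    (g : P →ₗ[R] N) : range (lTensor M g) = map₂ (TensorProduct.mk R M N) ⊤ (range g) := by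
  rw [lTensor, range_map, range_id]

theorem Submodule.map_comm_map₂_mk (P : Submodule R M) (Q : Submodule R N) :
    map (TensorProduct.comm R M N).toLinearMap (map₂ (TensorProduct.mk R M N) P Q) =
      map₂ (TensorProduct.mk R N M) Q P := by
  rw [map_map₂, ← map₂_flip]
  rfl

end CommSemiring

variable [CommRing R] [AddCommGroup M] [Module R M] [AddCommGroup N] [Module R N]

theorem LinearMap.ker_rTensor_of_flat [Module.Flat R N] {P : Type*} [AddCommGroup P]
    [Module R P] (f : P →ₗ[R] M) : ker (rTensor N f) = range (rTensor N (ker f).subtype) :=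
  exact_iff.mp (Module.Flat.rTensor_exact N (exact_subtype_ker_map f))

theorem Submodule.map₂_mk_eq_map₂_top_inf_map₂_top (P : Submodule R M) (Q : Submodule R N)
    [Module.Flat R (N ⧸ Q)] :
    map₂ (TensorProduct.mk R M N) P Q =
      map₂ (TensorProduct.mk R M N) P ⊤ ⊓ map₂ (TensorProduct.mk R M N) ⊤ Q := by
  have hinj : ker (rTensor (N ⧸ Q) P.subtype) = ⊥ :=
    ker_eq_bot.mpr (Module.Flat.rTensor_preserves_injective_linearMap _ P.injective_subtype)
  have hcomm : lTensor M Q.mkQ ∘ₗ rTensor N P.subtype =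
      rTensor (N ⧸ Q) P.subtype ∘ₗ lTensor P Q.mkQ := by
    rw [lTensor_comp_rTensor, rTensor_comp_lTensor]
  symm
  calc map₂ (TensorProduct.mk R M N) P ⊤ ⊓ map₂ (TensorProduct.mk R M N) ⊤ Q
      = range (rTensor N P.subtype) ⊓ ker (lTensor M Q.mkQ) := by
        rw [lTensor_mkQ, range_rTensor_eq_map₂, range_lTensor_eq_map₂, range_subtype,
          range_subtype]
    _ = map (rTensor N P.subtype) (ker (lTensor P Q.mkQ)) := by
        rw [range_inf_ker_eq_map_ker_comp, hcomm, ker_comp_of_ker_eq_bot _ hinj]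
    _ = map₂ (TensorProduct.mk R M N) P Q := by
        rw [lTensor_mkQ, ← range_comp, rTensor_comp_lTensor, range_map, range_subtype,
          range_subtype]

theorem Submodule.map₂_mk_inf_top [Module.Flat R N] (P P' : Submodule R M) :
    map₂ (TensorProduct.mk R M N) (P ⊓ P') ⊤ =
      map₂ (TensorProduct.mk R M N) P ⊤ ⊓ map₂ (TensorProduct.mk R M N) P' ⊤ := by
  symm
  calc map₂ (TensorProduct.mk R M N) P ⊤ ⊓ map₂ (TensorProduct.mk R M N) P' ⊤
      = range (rTensor N P.subtype) ⊓ ker (rTensor N P'.mkQ) := by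
        rw [rTensor_mkQ, range_rTensor_eq_map₂, range_rTensor_eq_map₂, range_subtype,
          range_subtype]
    _ = map (rTensor N P.subtype) (range (rTensor N (comap P.subtype P').subtype)) := by
        rw [range_inf_ker_eq_map_ker_comp, ← rTensor_comp, ker_rTensor_of_flat, ker_comp, ker_mkQ]
    _ = map₂ (TensorProduct.mk R M N) (P ⊓ P') ⊤ := by
        rw [← range_comp, ← rTensor_comp, range_rTensor_eq_map₂, range_comp, range_subtype,
          map_comap_subtype]

theorem Submodule.map₂_mk_top_inf [Module.Flat R M] (Q Q' : Submodule R N) :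
    map₂ (TensorProduct.mk R M N) ⊤ (Q ⊓ Q') =
      map₂ (TensorProduct.mk R M N) ⊤ Q ⊓ map₂ (TensorProduct.mk R M N) ⊤ Q' := by
  rw [← map_comm_map₂_mk (Q ⊓ Q') ⊤, map₂_mk_inf_top,
    map_inf _ (TensorProduct.comm R N M).injective, map_comm_map₂_mk, map_comm_map₂_mk]

end TensorProduct

theorem tensorSpan_eq_map₂ {K V W : Type*} [Field K] [AddCommGroup V] [Module K V]
    [AddCommGroup W] [Module K W] (P : Submodule K V) (Q : Submodule K W) :
    tensorSpan K P Q = map₂ (TensorProduct.mk K V W) P Q := by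
  rw [tensorSpan, map₂_eq_span_image2]
  congr 1
  ext t
  simp [eq_comm]

/-- Intersection of tensor products of subspaces:
`(A ⊗̂ B') ∩ (A' ⊗̂ B) = (A ∩ A') ⊗̂ (B ∩ B')`. -/
theorem tensorSpan_inf_tensorSpan (K : Type*) {V W : Type*} [Field K]
    [AddCommGroup V] [Module K V] [AddCommGroup W] [Module K W]
    (A A' : Submodule K V) (B B' : Submodule K W) :
    tensorSpan K A B' ⊓ tensorSpan K A' B = tensorSpan K (A ⊓ A') (B ⊓ B') := by
  simp only [tensorSpan_eq_map₂]
  rw [map₂_mk_eq_map₂_top_inf_map₂_top A B', map₂_mk_eq_map₂_top_inf_map₂_top A' B,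
    map₂_mk_eq_map₂_top_inf_map₂_top (A ⊓ A') (B ⊓ B'), inf_inf_inf_comm, ← map₂_mk_inf_top,
    ← map₂_mk_top_inf, inf_comm B' B]
end

section
/- Invertibility of the weighted projection on a finite-dimensional subspace: Let (α, μ) be a measure space and ω : α → ℝ a measurable function that is essentially bounded and satisfies ω(a) > 0 for μ-almost every a. Let V be a finite-dimensional subspace of the real Hilbert space L²(μ). Define P_ω : V → V by P_ω(L) = (orthogonal projection onto V) of the element ω·L of L²(μ). Then P_ω is a linear bijection of V onto itself. -/
/-!
For `L ∈ V`, self-adjointness of the projection gives `⟪L, P_ω L⟫ = ⟪L, ω·L⟫ = ∫ ω L² dμ`,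
which vanishes only when `L = 0` because `ω > 0` a.e. So `P_ω` is injective, and an injective
endomorphism of a finite-dimensional space is bijective.
-/

open MeasureTheory

theorem L2.eq_zero_of_inner_weighted_eq_zero {α : Type*} [MeasurableSpace α] {μ : Measure α}
    {ω : α → ℝ} (hpos : ∀ᵐ a ∂μ, 0 < ω a) {f g : Lp ℝ 2 μ}
    (hg : (g : α → ℝ) =ᵐ[μ] fun a => ω a * f a) (h : inner ℝ f g = 0) : f = 0 := by
  have hfg : (fun a => f a * g a) =ᵐ[μ] fun a => ω a * f a ^ 2 := by
    filter_upwards [hg] with a ha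
    rw [ha]; ring
  have hint : Integrable (fun a => f a * g a) μ := by
    simpa [mul_comm] using L2.integrable_inner (𝕜 := ℝ) f g
  have hnonneg : 0 ≤ᵐ[μ] fun a => f a * g a := by
    filter_upwards [hfg, hpos] with a ha hω
    rw [ha]; positivity
  have hzero : (fun a => f a * g a) =ᵐ[μ] 0 := by
    refine (integral_eq_zero_iff_of_nonneg_ae hnonneg hint).mp ?_
    simpa [L2.inner_def, mul_comm] using h
  refine Lp.ext ?_
  filter_upwards [hzero, hfg, hpos, Lp.coeFn_zero ℝ 2 μ] with a h0 ha hω hz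
  rw [hz]
  simpa [hω.ne'] using ha.symm.trans h0

/-- Invertibility of the weighted projection on a finite-dimensional subspace of `L²`:
if `ω` is measurable, essentially bounded and a.e. strictly positive, and `V` is a
finite-dimensional subspace of `L²(μ)`, then the map `P_ω : V → V`,
`L ↦ orthogonal projection onto V of ω·L`, is a linear bijection of `V` onto itself. -/
theorem weighted_projection_bijective
    {α : Type*} [MeasurableSpace α] (μ : Measure α)
    (ω : α → ℝ) (hmeas : Measurable ω)
    (C : ℝ) (hbound : ∀ᵐ a ∂μ, |ω a| ≤ C)
    (hpos : ∀ᵐ a ∂μ, 0 < ω a)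
    (V : Submodule ℝ (Lp ℝ 2 μ)) [FiniteDimensional ℝ V]
    (Pω : V →ₗ[ℝ] V)
    (hPω : ∀ (L : V) (g : Lp ℝ 2 μ),
      (g : α → ℝ) =ᵐ[μ] (fun a => ω a * (L : Lp ℝ 2 μ) a) →
      Pω L = V.orthogonalProjectionOnto g) :
    Function.Bijective Pω := by
  have hinj : Function.Injective Pω := by
    refine (injective_iff_map_eq_zero Pω).mpr fun L hL => ?_
    have hmem : MemLp (fun a => ω a * (L : Lp ℝ 2 μ) a) 2 μ :=
      (Lp.memLp (L : Lp ℝ 2 μ)).mul' (memLp_top_of_bound hmeas.aestronglyMeasurable C hbound)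
    have hperp : hmem.toLp _ ∈ Vᗮ := Submodule.orthogonalProjectionOnto_eq_zero_iff.mp
      ((hPω L _ hmem.coeFn_toLp).symm.trans hL)
    exact Subtype.ext (L2.eq_zero_of_inner_weighted_eq_zero hpos hmem.coeFn_toLp (hperp _ L.2))
  exact ⟨hinj, LinearMap.injective_iff_surjective.mp hinj⟩
end
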